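/- arXiv:2206.00505 — 3 statements merged into one kernel-verified Lean document; each statement's English description precedes it below -/
import Mathlib

section
/- Fix k > 0, l ≥ 1. The pair E²(r) = sqrt(l(l+1))·(j_l'(k r)·k + j_l(k r)/r), E³(r) = l(l+1)·j_l(k r)/r satisfies the coupled system L_{k,l}(E²) = −2 sqrt(l(l+1)) E³ and L_{k,l}(E³) = 2 E³ − 2 sqrt(l(l+1)) E², where L_{k,l}(f)(r) = d/dr(r² f'(r)) + (k² r² − l(l+1)) f(r). -/
/-- The pair `E²(r) = √(l(l+1))(k j'(k r) + j(k r)/r)`,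
`E³(r) = l(l+1) j(k r)/r` solves the coupled system
`L_{k,l}(E²) = -2√(l(l+1)) E³`, `L_{k,l}(E³) = 2E³ - 2√(l(l+1)) E²`,
where `L_{k,l}(f)(r) = d/dr(r² f'(r)) + (k² r² - l(l+1)) f(r)`. -/
theorem coupled_system_solution
    (l : ℕ) (hl : 1 ≤ l) (k : ℝ) (hk : 0 < k)
    (j : ℝ → ℝ) (hj : ContDiff ℝ (⊤ : ℕ∞) j)
    (hODE : ∀ z : ℝ, z ^ 2 * iteratedDeriv 2 j z + 2 * z * deriv j z
      + (z ^ 2 - (l : ℝ) * ((l : ℝ) + 1)) * j z = 0)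
    (E2 E3 : ℝ → ℝ)
    (hE2 : ∀ r : ℝ, E2 r = Real.sqrt ((l : ℝ) * ((l : ℝ) + 1))
      * (deriv j (k * r) * k + j (k * r) / r))
    (hE3 : ∀ r : ℝ, E3 r = (l : ℝ) * ((l : ℝ) + 1) * j (k * r) / r) :
    ∀ r : ℝ, 0 < r →
      (deriv (fun s : ℝ => s ^ 2 * deriv E2 s) r
          + (k ^ 2 * r ^ 2 - (l : ℝ) * ((l : ℝ) + 1)) * E2 r
        = - 2 * Real.sqrt ((l : ℝ) * ((l : ℝ) + 1)) * E3 r)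
      ∧ (deriv (fun s : ℝ => s ^ 2 * deriv E3 s) r
          + (k ^ 2 * r ^ 2 - (l : ℝ) * ((l : ℝ) + 1)) * E3 r
        = 2 * E3 r - 2 * Real.sqrt ((l : ℝ) * ((l : ℝ) + 1)) * E2 r) := by
  set L : ℝ := (l : ℝ) * ((l : ℝ) + 1) with hLdef
  have hL0 : (0:ℝ) ≤ L := by positivity
  set q : ℝ := Real.sqrt L with hqdef
  have hqq : q * q = L := Real.mul_self_sqrt hL0
  -- smoothness
  have hdj : Differentiable ℝ j := hj.differentiable (by simp)
  have hjinf : ContDiff ℝ (⊤ : ℕ∞) j := hj.of_le (mod_cast le_top)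
  have hj1 : ContDiff ℝ (⊤ : ℕ∞) (deriv j) := (contDiff_infty_iff_deriv.mp hjinf).2
  have hdj1 : Differentiable ℝ (deriv j) := hj1.differentiable (by simp)
  have hj2 : ContDiff ℝ (⊤ : ℕ∞) (deriv (deriv j)) := (contDiff_infty_iff_deriv.mp hj1).2
  have hdj2 : Differentiable ℝ (deriv (deriv j)) := hj2.differentiable (by simp)
  -- ODE in terms of deriv ∘ deriv
  have hODE2 : ∀ z : ℝ, z ^ 2 * deriv (deriv j) z + 2 * z * deriv j z
      + (z ^ 2 - L) * j z = 0 := by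
    intro z
    have h := hODE z
    rwa [show iteratedDeriv 2 j = deriv (deriv j) by
      rw [iteratedDeriv_succ, iteratedDeriv_one]] at h
  -- differentiated ODE
  have hODE3 : ∀ z : ℝ, z ^ 2 * deriv (deriv (deriv j)) z
      + 4 * z * deriv (deriv j) z + (z ^ 2 - L + 2) * deriv j z + 2 * z * j z = 0 := by
    intro z
    have hz2 : HasDerivAt (fun z : ℝ => z ^ 2) (2 * z) z := by
      simpa using hasDerivAt_pow 2 z
    have hF : HasDerivAt (fun z : ℝ => z ^ 2 * deriv (deriv j) z + 2 * z * deriv j z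
        + (z ^ 2 - L) * j z)
        ((2 * z) * deriv (deriv j) z + z ^ 2 * deriv (deriv (deriv j)) z
          + (2 * deriv j z + (2 * z) * deriv (deriv j) z)
          + ((2 * z) * j z + (z ^ 2 - L) * deriv j z)) z := by
      have h1 := hz2.mul ((hdj2 z).hasDerivAt)
      have h2 := ((hasDerivAt_id z).const_mul (2:ℝ)).mul ((hdj1 z).hasDerivAt)
      have h3 := (hz2.sub_const L).mul ((hdj z).hasDerivAt)
      have := (h1.add h2).add h3
      refine this.congr_deriv ?_
      simp only [id_eq]
      ring
    have hF0 : (fun z : ℝ => z ^ 2 * deriv (deriv j) z + 2 * z * deriv j z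
        + (z ^ 2 - L) * j z) = fun _ => (0:ℝ) := funext hODE2
    rw [hF0] at hF
    have := hF.unique (hasDerivAt_const z 0)
    linarith [this]
  -- helper: composed derivatives
  have hkc : ∀ t : ℝ, HasDerivAt (fun u : ℝ => k * u) k t := by
    intro t; simpa using (hasDerivAt_id t).const_mul k
  have hjc : ∀ t : ℝ, HasDerivAt (fun u : ℝ => j (k * u)) (deriv j (k * t) * k) t :=
    fun t => ((hdj (k * t)).hasDerivAt).comp t (hkc t)
  have hj1c : ∀ t : ℝ, HasDerivAt (fun u : ℝ => deriv j (k * u))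
      (deriv (deriv j) (k * t) * k) t :=
    fun t => ((hdj1 (k * t)).hasDerivAt).comp t (hkc t)
  have hj2c : ∀ t : ℝ, HasDerivAt (fun u : ℝ => deriv (deriv j) (k * u))
      (deriv (deriv (deriv j)) (k * t) * k) t :=
    fun t => ((hdj2 (k * t)).hasDerivAt).comp t (hkc t)
  intro r hr
  have hr0 : r ≠ 0 := ne_of_gt hr
  have hne : ∀ᶠ u in nhds r, u ≠ (0:ℝ) := eventually_ne_nhds hr0
  -- derivative formulas for E2 and E3 off 0
  set g2 : ℝ → ℝ := fun t => q * (deriv (deriv j) (k * t) * k * k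
      + (deriv j (k * t) * k * t - j (k * t)) / t ^ 2) with hg2def
  set g3 : ℝ → ℝ := fun t => L * (deriv j (k * t) * k * t - j (k * t)) / t ^ 2 with hg3def
  have hE2fun : E2 = fun u : ℝ => q * (deriv j (k * u) * k + j (k * u) / u) := funext hE2
  have hE3fun : E3 = fun u : ℝ => L * j (k * u) / u := funext hE3
  have hDE2 : ∀ t : ℝ, t ≠ 0 → HasDerivAt E2 (g2 t) t := by
    intro t ht
    rw [hE2fun]
    have h1 := (hj1c t).mul_const k
    have h2 := (hjc t).div (hasDerivAt_id t) ht
    have := ((h1.add h2).const_mul q)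
    refine this.congr_deriv ?_
    simp only [hg2def, id_eq]
    ring
  have hDE3 : ∀ t : ℝ, t ≠ 0 → HasDerivAt E3 (g3 t) t := by
    intro t ht
    rw [hE3fun]
    have h2 := (((hjc t).const_mul L).div (hasDerivAt_id t) ht)
    refine h2.congr_deriv ?_
    simp only [hg3def, id_eq]
    ring
  -- replace deriv E2 / E3 by g2 / g3 near r
  have hev2 : (fun u : ℝ => u ^ 2 * deriv E2 u) =ᶠ[nhds r] (fun u => u ^ 2 * g2 u) := by
    filter_upwards [hne] with u hu
    rw [(hDE2 u hu).deriv]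
  have hev3 : (fun u : ℝ => u ^ 2 * deriv E3 u) =ᶠ[nhds r] (fun u => u ^ 2 * g3 u) := by
    filter_upwards [hne] with u hu
    rw [(hDE3 u hu).deriv]
  -- derivative of g2 at r
  have hr2 : HasDerivAt (fun u : ℝ => u ^ 2) (2 * r) r := by
    simpa using hasDerivAt_pow 2 r
  have hr2ne : r ^ 2 ≠ 0 := pow_ne_zero 2 hr0
  have hC : HasDerivAt (fun u : ℝ => deriv j (k * u) * k * u - j (k * u))
      ((deriv (deriv j) (k * r) * k * k) * r + deriv j (k * r) * k
        - deriv j (k * r) * k) r := by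
    have h1 := ((hj1c r).mul_const k).mul (hasDerivAt_id r)
    have h2 := (h1.sub (hjc r))
    refine h2.congr_deriv ?_
    simp only [id_eq]
    ring
  have hg2' : HasDerivAt g2
      (q * (deriv (deriv (deriv j)) (k * r) * k * k * k
        + (((deriv (deriv j) (k * r) * k * k) * r + deriv j (k * r) * k
            - deriv j (k * r) * k) * r ^ 2
          - (deriv j (k * r) * k * r - j (k * r)) * (2 * r)) / (r ^ 2) ^ 2)) r := by
    have h1 := ((hj2c r).mul_const k).mul_const k
    have h2 := hC.div hr2 hr2ne
    have := (h1.add h2).const_mul q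
    exact this
  have hg3' : HasDerivAt g3
      (((((deriv (deriv j) (k * r) * k * k) * r + deriv j (k * r) * k
            - deriv j (k * r) * k) * L) * r ^ 2
        - L * (deriv j (k * r) * k * r - j (k * r)) * (2 * r)) / (r ^ 2) ^ 2) r := by
    have := ((hC.const_mul L).div hr2 hr2ne)
    refine this.congr_deriv ?_
    ring
  -- main derivatives
  have hD2 : deriv (fun u : ℝ => u ^ 2 * deriv E2 u) r
      = 2 * r * g2 r + r ^ 2 * (q * (deriv (deriv (deriv j)) (k * r) * k * k * k
        + (((deriv (deriv j) (k * r) * k * k) * r + deriv j (k * r) * k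
            - deriv j (k * r) * k) * r ^ 2
          - (deriv j (k * r) * k * r - j (k * r)) * (2 * r)) / (r ^ 2) ^ 2)) := by
    rw [Filter.EventuallyEq.deriv_eq hev2]
    exact (hr2.mul hg2').deriv
  have hD3 : deriv (fun u : ℝ => u ^ 2 * deriv E3 u) r
      = 2 * r * g3 r + r ^ 2 * (((((deriv (deriv j) (k * r) * k * k) * r
            + deriv j (k * r) * k - deriv j (k * r) * k) * L) * r ^ 2
        - L * (deriv j (k * r) * k * r - j (k * r)) * (2 * r)) / (r ^ 2) ^ 2) := by
    rw [Filter.EventuallyEq.deriv_eq hev3]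
    exact (hr2.mul hg3').deriv
  have ode := hODE2 (k * r)
  have ode' := hODE3 (k * r)
  constructor
  · rw [hD2, hE2 r, hE3 r]
    simp only [hg2def]
    generalize j (k * r) = A at ode ode' ⊢
    generalize deriv j (k * r) = B at ode ode' ⊢
    generalize deriv (deriv j) (k * r) = C at ode ode' ⊢
    generalize deriv (deriv (deriv j)) (k * r) = D at ode ode' ⊢
    field_simp
    linear_combination (q * k * r) * ode' - q * ode
  · rw [hD3, hE3 r, hE2 r]
    simp only [hg3def]
    generalize j (k * r) = A at ode ode' ⊢
    generalize deriv j (k * r) = B at ode ode' ⊢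
    generalize deriv (deriv j) (k * r) = C at ode ode' ⊢
    field_simp
    linear_combination L * ode
      + (2 * (B * k * r + A)) * hqq
end

section
/- Fix k ≠ 0, l ≥ 1, with j_l(k) ≠ 0, j_l'(k) ≠ 0, and k j_l(k) j_l'(k) − l(l+1) j_l(k)² + k² j_l'(k)² ≠ 0. Let F²(r) = −(l(l+1))^{3/2} j_l(k)/(k j_l'(k)) · j_l(k r)/r + sqrt(l(l+1))·(j_l(k r)/r + k j_l'(k r)). Then −(F²(1) + (F²)'(1))/F²(1) = k³ j_l(k) j_l'(k) / (k j_l(k) j_l'(k) − l(l+1) j_l(k)² + k² j_l'(k)²). -/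
/-!
At `r = 1` the Bessel equation `k² j''(k) = -2k j'(k) - (k² - l(l+1)) j(k)` eliminates the second
derivative from `F²(1) + (F²)'(1)`, and the coefficient `-l(l+1)^{3/2} j(k)/(k j'(k))` is chosen so
that everything except `-√(l(l+1)) k² j(k)` cancels. Multiplying `F²(1)` by `k j'(k)` produces
`√(l(l+1))` times the denominator of the claimed quotient, and the factor `√(l(l+1)) ≠ 0` cancels.
-/

section ScaledProfile

variable {f : ℝ → ℝ} {f' f'' k : ℝ}

theorem HasDerivAt.comp_const_mul {x : ℝ} (hf : HasDerivAt f f' (k * x)) :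
    HasDerivAt (fun r => f (k * r)) (k * f') x := by
  rw [mul_comm]
  exact hf.comp x (by simpa using (hasDerivAt_id x).const_mul k)

theorem HasDerivAt.comp_const_mul_div_id_one (hf : HasDerivAt f f' k) :
    HasDerivAt (fun r => f (k * r) / r) (k * f' - f k) 1 :=
  ((HasDerivAt.comp_const_mul (by rwa [mul_one])).div (hasDerivAt_id (1 : ℝ))
    one_ne_zero).congr_deriv (by simp)

theorem hasDerivAt_besselProfile_one (A s : ℝ) (hf : HasDerivAt f f' k)
    (hf' : HasDerivAt (deriv f) f'' k) :
    HasDerivAt (fun r => A * (f (k * r) / r) + s * (f (k * r) / r + k * deriv f (k * r)))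
      (A * (k * f' - f k) + s * (k * f' - f k + k * (k * f''))) 1 := by
  rw [← mul_one k] at hf'
  have hquot := hf.comp_const_mul_div_id_one
  exact (hquot.const_mul A).add ((hquot.add (hf'.comp_const_mul.const_mul k)).const_mul s)

end ScaledProfile

theorem steklov_quotient_of_bessel_relation {k a b c s A : ℝ} (hk : k ≠ 0) (hb : b ≠ 0)
    (hs : s ≠ 0) (hA : A = -s ^ 3 * a / (k * b))
    (hode : k ^ 2 * c + 2 * k * b + (k ^ 2 - s ^ 2) * a = 0)
    (hden : k * a * b - s ^ 2 * a ^ 2 + k ^ 2 * b ^ 2 ≠ 0) :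
    -((A * a + s * (a + k * b)) + (A * (k * b - a) + s * (k * b - a + k * (k * c))))
        / (A * a + s * (a + k * b))
      = k ^ 3 * a * b / (k * a * b - s ^ 2 * a ^ 2 + k ^ 2 * b ^ 2) := by
  have hAkb : A * (k * b) = -s ^ 3 * a := by rw [hA]; field_simp
  have hsum : (A * a + s * (a + k * b)) + (A * (k * b - a) + s * (k * b - a + k * (k * c)))
      = -(s * k ^ 2 * a) := by
    linear_combination hAkb + s * hode
  have hvalue : (A * a + s * (a + k * b)) * (k * b)
      = s * (k * a * b - s ^ 2 * a ^ 2 + k ^ 2 * b ^ 2) := by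
    linear_combination a * hAkb
  have hvalue_ne : A * a + s * (a + k * b) ≠ 0 := by
    intro h
    rw [h, zero_mul, eq_comm] at hvalue
    exact mul_ne_zero hs hden hvalue
  rw [hsum, div_eq_div_iff hvalue_ne hden]
  linear_combination (-(k ^ 2 * a)) * hvalue

theorem steklov_eigenvalue_first_family_theta_one_general
    (l : ℕ) (hl : 1 ≤ l) (k : ℝ) (hk : k ≠ 0)
    (j : ℝ → ℝ) (hj : ContDiff ℝ ⊤ j)
    (hODE : ∀ z : ℝ, z ^ 2 * iteratedDeriv 2 j z + 2 * z * deriv j z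
      + (z ^ 2 - (l : ℝ) * ((l : ℝ) + 1)) * j z = 0)
    (hjk' : deriv j k ≠ 0)
    (hden : k * j k * deriv j k - (l : ℝ) * ((l : ℝ) + 1) * (j k) ^ 2
      + k ^ 2 * (deriv j k) ^ 2 ≠ 0)
    (F2 : ℝ → ℝ)
    (hF2 : ∀ r : ℝ, F2 r
      = - (Real.sqrt ((l : ℝ) * ((l : ℝ) + 1))) ^ 3 * j k / (k * deriv j k) * (j (k * r) / r)
        + Real.sqrt ((l : ℝ) * ((l : ℝ) + 1)) * (j (k * r) / r + k * deriv j (k * r))) :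
    - (F2 1 + deriv F2 1) / F2 1
      = k ^ 3 * j k * deriv j k
        / (k * j k * deriv j k - (l : ℝ) * ((l : ℝ) + 1) * (j k) ^ 2
            + k ^ 2 * (deriv j k) ^ 2) := by
  set s := Real.sqrt ((l : ℝ) * ((l : ℝ) + 1))
  have hLpos : 0 < (l : ℝ) * ((l : ℝ) + 1) := mul_pos (Nat.cast_pos.mpr hl) (by positivity)
  have hs2 : s ^ 2 = (l : ℝ) * ((l : ℝ) + 1) := Real.sq_sqrt hLpos.le
  have hs : s ≠ 0 := Real.sqrt_ne_zero'.mpr hLpos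
  have hdj : Differentiable ℝ (deriv j) := by
    simpa using hj.differentiable_iteratedDeriv 1 (by simp)
  have hF2_deriv := hasDerivAt_besselProfile_one (-s ^ 3 * j k / (k * deriv j k)) s
    ((hj.differentiable (by simp)) k).hasDerivAt (hdj k).hasDerivAt
  rw [← funext hF2] at hF2_deriv
  have hode : k ^ 2 * deriv (deriv j) k + 2 * k * deriv j k + (k ^ 2 - s ^ 2) * j k = 0 := by
    simpa [hs2, iteratedDeriv_succ] using hODE k
  rw [hF2_deriv.deriv, hF2 1, ← hs2]
  simpa using steklov_quotient_of_bessel_relation hk hjk' hs rfl hode (hs2 ▸ hden)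

/-- With `F²` as in Statement 7 and `j` the spherical Bessel function of
order `l`, the Steklov eigenvalue quotient satisfies
`-(F²(1) + (F²)'(1))/F²(1) = k³ j(k) j'(k)/(k j(k) j'(k) - l(l+1) j(k)² + k² j'(k)²)`. -/
theorem steklov_eigenvalue_first_family_theta_one
    (l : ℕ) (hl : 1 ≤ l) (k : ℝ) (hk : k ≠ 0)
    (j : ℝ → ℝ) (hj : ContDiff ℝ ⊤ j)
    (hODE : ∀ z : ℝ, z ^ 2 * iteratedDeriv 2 j z + 2 * z * deriv j z
      + (z ^ 2 - (l : ℝ) * ((l : ℝ) + 1)) * j z = 0)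
    (hjk : j k ≠ 0) (hjk' : deriv j k ≠ 0)
    (hden : k * j k * deriv j k - (l : ℝ) * ((l : ℝ) + 1) * (j k) ^ 2
      + k ^ 2 * (deriv j k) ^ 2 ≠ 0)
    (F2 : ℝ → ℝ)
    (hF2 : ∀ r : ℝ, F2 r
      = - (Real.sqrt ((l : ℝ) * ((l : ℝ) + 1))) ^ 3 * j k / (k * deriv j k) * (j (k * r) / r)
        + Real.sqrt ((l : ℝ) * ((l : ℝ) + 1)) * (j (k * r) / r + k * deriv j (k * r))) :
    - (F2 1 + deriv F2 1) / F2 1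
      = k ^ 3 * j k * deriv j k
        / (k * j k * deriv j k - (l : ℝ) * ((l : ℝ) + 1) * (j k) ^ 2
            + k ^ 2 * (deriv j k) ^ 2) :=
  steklov_eigenvalue_first_family_theta_one_general l hl k hk j hj hODE hjk' hden F2 hF2
end

section
/- For fixed k > 0, the second family of Steklov eigenvalues λ_l^{(2)} = −(j_l(k) + k j_l'(k))/j_l(k) satisfies λ_l^{(2)}/(−l) → 1 as l → ∞ (along l for which j_l(k) ≠ 0). -/
open Filter

noncomputable def aaSB (k : ℝ) (l : ℕ) : ℝ :=
  Real.exp ((l : ℝ) + 1 / 2) * k ^ l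
    / (Real.rpow 2 ((l : ℝ) + 3 / 2) * ((l : ℝ) + 1 / 2) ^ (l + 1))

lemma aaSB_pos (k : ℝ) (hk : 0 < k) (l : ℕ) : 0 < aaSB k l := by
  unfold aaSB
  have h2 : (0:ℝ) < Real.rpow 2 ((l : ℝ) + 3 / 2) := Real.rpow_pos_of_pos (by norm_num) _
  positivity

/-- For fixed `k > 0`, the second family of Steklov eigenvalues
`λ_l^{(2)} = -(j_l(k) + k j_l'(k))/j_l(k)` satisfies `λ_l^{(2)}/(-l) → 1` as `l → ∞`,
given the large-order asymptotics of `j_l(k)` and the recurrence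
`j_l'(z) = j_{l-1}(z) - (l+1)/z · j_l(z)`. -/
theorem second_family_eigenvalue_asymptotics
    (k : ℝ) (hk : 0 < k)
    (j : ℕ → ℝ → ℝ)
    (hnz : ∀ l : ℕ, j l k ≠ 0)
    (hasymp : Tendsto (fun l : ℕ => j l k
        / (Real.exp ((l : ℝ) + 1 / 2) * k ^ l
            / (Real.rpow 2 ((l : ℝ) + 3 / 2) * ((l : ℝ) + 1 / 2) ^ (l + 1))))
      atTop (nhds 1))
    (hrec : ∀ l : ℕ, 1 ≤ l → ∀ z : ℝ, z ≠ 0 →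
      deriv (j l) z = j (l - 1) z - ((l : ℝ) + 1) / z * j l z) :
    Tendsto (fun l : ℕ =>
        (- (j l k + k * deriv (j l) k) / j l k) / (- (l : ℝ)))
      atTop (nhds 1) := by
  have ha := fun l => aaSB_pos k hk l
  have h1 : Tendsto (fun l : ℕ => j l k / aaSB k l) atTop (nhds 1) := hasymp
  -- shifted version
  have h2 : Tendsto (fun l : ℕ => j (l - 1) k / aaSB k (l - 1)) atTop (nhds 1) :=
    h1.comp (tendsto_sub_atTop_nat 1)
  have h3 : Tendsto (fun l : ℕ => aaSB k l / j l k) atTop (nhds 1) := by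
    have := h1.inv₀ one_ne_zero
    simp only [inv_one] at this
    refine this.congr fun l => ?_
    rw [inv_div]
  -- the explicit ratio tends to 2
  have hc : Tendsto (fun l : ℕ => k * aaSB k (l - 1) / ((l : ℝ) * aaSB k l))
      atTop (nhds 2) := by
    have hA : Tendsto (fun l : ℕ => (1 + (1/2 : ℝ) / l) ^ l) atTop (nhds (Real.exp (1/2))) :=
      Real.tendsto_one_add_div_pow_exp (1/2)
    have hB : Tendsto (fun l : ℕ => (1 + (-(1/2) : ℝ) / l) ^ l) atTop
        (nhds (Real.exp (-(1/2)))) := Real.tendsto_one_add_div_pow_exp (-(1/2))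
    have hB' : Tendsto (fun l : ℕ => ((1 + (-(1/2) : ℝ) / l) ^ l)⁻¹) atTop
        (nhds (Real.exp (-(1/2)))⁻¹) := hB.inv₀ (Real.exp_ne_zero _)
    have hhalf : Tendsto (fun l : ℕ => (1/2 : ℝ) / l) atTop (nhds 0) :=
      tendsto_const_div_atTop_nhds_zero_nat _
    have hfrac : Tendsto (fun l : ℕ => ((l : ℝ) + 1/2) / l) atTop (nhds 1) := by
      have := (tendsto_const_nhds (x := (1:ℝ)) (f := atTop (α := ℕ))).add hhalf
      rw [add_zero] at this
      refine Tendsto.congr' ?_ this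
      filter_upwards [eventually_ge_atTop 1] with l hl
      have hl0 : (l : ℝ) ≠ 0 := Nat.cast_ne_zero.mpr (by omega)
      field_simp
    have hmain : Tendsto (fun l : ℕ =>
        (2 / Real.exp 1) * (((l : ℝ) + 1/2) / l)
          * ((1 + (1/2 : ℝ) / l) ^ l * ((1 + (-(1/2) : ℝ) / l) ^ l)⁻¹))
        atTop (nhds ((2 / Real.exp 1) * 1 * (Real.exp (1/2) * (Real.exp (-(1/2)))⁻¹))) :=
      ((tendsto_const_nhds.mul hfrac)).mul (hA.mul hB')
    have hval : (2 / Real.exp 1) * 1 * (Real.exp (1/2) * (Real.exp (-(1/2)))⁻¹) = 2 := by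
      rw [← Real.exp_neg, neg_neg, ← Real.exp_add]
      norm_num
    rw [hval] at hmain
    refine Tendsto.congr' ?_ hmain
    filter_upwards [eventually_ge_atTop 1] with l hl
    obtain ⟨n, rfl⟩ := Nat.exists_eq_add_of_le hl
    simp only [Nat.add_sub_cancel_left, aaSB]
    have hn1 : ((1 + n : ℕ) : ℝ) = (n : ℝ) + 1 := by push_cast; ring
    have hnpos : (0:ℝ) < (n : ℝ) + 1 := by positivity
    have e1 : Real.exp (((1 + n : ℕ) : ℝ) + 1/2) = Real.exp ((n : ℝ) + 1/2) * Real.exp 1 := by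
      rw [← Real.exp_add, hn1]; ring_nf
    have hrw : ∀ y : ℝ, Real.rpow 2 y = (2:ℝ) ^ y := fun _ => rfl
    have e2 : Real.rpow 2 (((1 + n : ℕ) : ℝ) + 3/2)
        = Real.rpow 2 ((n : ℝ) + 3/2) * 2 := by
      rw [hrw, hrw, hn1, show (n : ℝ) + 1 + 3/2 = ((n : ℝ) + 3/2) + 1 by ring,
        Real.rpow_add (by norm_num), Real.rpow_one]
    have e3 : k ^ (1 + n) = k ^ n * k := by rw [pow_add]; ring
    have hx : (1 + (1/2 : ℝ) / ((1 + n : ℕ) : ℝ)) = ((n : ℝ) + 3/2) / ((n : ℝ) + 1) := by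
      rw [hn1]; field_simp; ring
    have hy : (1 + (-(1/2) : ℝ) / ((1 + n : ℕ) : ℝ)) = ((n : ℝ) + 1/2) / ((n : ℝ) + 1) := by
      rw [hn1]; field_simp; ring
    rw [e1, e2, e3, hx, hy, hn1]
    have hrp : (0:ℝ) < Real.rpow 2 ((n : ℝ) + 3/2) := Real.rpow_pos_of_pos (by norm_num) _
    have h12 : (0:ℝ) < (n : ℝ) + 1/2 := by positivity
    have h32 : (0:ℝ) < (n : ℝ) + 3/2 := by positivity
    have hexp : Real.exp ((n:ℝ) + 1/2) ≠ 0 := Real.exp_ne_zero _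
    have hcast2 : (1 + n) + 1 = n + 2 := by omega
    rw [show ((n:ℝ) + 1 + 1/2) = (n : ℝ) + 3/2 by ring, hcast2, div_pow, div_pow]
    have h12' := h12.ne'
    have h32' := h32.ne'
    have hrp' := hrp.ne'
    have hnpos' := hnpos.ne'
    have hk' := hk.ne'
    field_simp
    ring
  -- the ratio of interest tends to 2
  have hg : Tendsto (fun l : ℕ => k * j (l - 1) k / ((l : ℝ) * j l k)) atTop (nhds 2) := by
    have := (h2.mul h3).mul hc
    rw [show (1:ℝ) * 1 * 2 = 2 by norm_num] at this
    refine Tendsto.congr' ?_ this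
    filter_upwards [eventually_ge_atTop 1] with l hl
    have hal := (ha (l - 1)).ne'
    have hal2 := (ha l).ne'
    have hjl := hnz l
    have hl0 : (l : ℝ) ≠ 0 := Nat.cast_ne_zero.mpr (by omega)
    field_simp
  -- conclude
  have hfinal := (tendsto_const_nhds (x := (-1:ℝ)) (f := atTop (α := ℕ))).add hg
  rw [show (-1:ℝ) + 2 = 1 by norm_num] at hfinal
  refine Tendsto.congr' ?_ hfinal
  filter_upwards [eventually_ge_atTop 1] with l hl
  have hd := hrec l hl k hk.ne'
  have hjl := hnz l
  have hl0 : (l : ℝ) ≠ 0 := Nat.cast_ne_zero.mpr (by omega)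
  rw [hd]
  field_simp
  ring
end
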